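/- Let d, L ∈ ℕ and let H be a bounded selfadjoint operator on ℓ²(ℤ^d, ℂ^L) whose matrix elements h(x, y) = ⟨x|H|y⟩ ∈ M_L(ℂ) vanish whenever max_{1≤j≤d} |x_j − y_j| > R (finite range). For j ∈ {1, …, d}, let K_j be the bounded operator with matrix elements ⟨x|K_j|y⟩ = (x_j − y_j)·h(x, y), and for ρ > 0 let S_j be the bounded multiplication operator (S_jψ)(x) = sin(π x_j/(2ρ))·ψ(x). Then ‖S_j H − H S_j‖ ≤ (π/(2ρ))·‖K_j‖, where ‖·‖ is the operator norm. -/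

import Mathlib

/-!
The matrix elements of `[sin(θX_j), H]` are `(sin θx_j - sin θy_j) h(x, y)`, and
`sin a = (-i/2)(e^{ia} - e^{-ia})`, so it suffices to bound the operator with matrix elements
`(e^{ia_x} - e^{ia_y}) h(x, y)` by `‖K‖` whenever `K` has matrix elements `(a_x - a_y) h(x, y)`.
Tested against finitely supported vectors this is `F 1 - F 0` for
`F t = ∑ conj ψ_x φ_y e^{i(a_y + t(a_x - a_y))} h(x, y)`, and `F' t = i⟨ψ_t, K φ_t⟩`, where
`ψ_t, φ_t` are `ψ, φ` multiplied by unimodular phases. The mean value inequality gives the bound on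
finitely supported vectors, and these are dense.
-/

noncomputable section

/-- The Hilbert space `ℓ²(ℤ^d, ℂ^L)`. -/
abbrev Ell2 (d L : ℕ) := lp (fun _ : (Fin d → ℤ) × Fin L => ℂ) 2

/-- The matrix element `⟨x, i| H |y, l⟩` of an operator `H` on `ℓ²(ℤ^d, ℂ^L)`. -/
def matElem {d L : ℕ} (H : Ell2 d L →L[ℂ] Ell2 d L) (x y : Fin d → ℤ) (i l : Fin L) : ℂ :=
  inner ℂ (lp.single 2 (x, i) (1 : ℂ)) (H (lp.single 2 (y, l) (1 : ℂ)))

open scoped ComplexConjugate InnerProductSpace ENNReal lp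
open Finset Complex

theorem ContinuousLinearMap.opNorm_le_of_denseRange_of_norm_inner_le {𝕜 E F α β : Type*}
    [RCLike 𝕜] [NormedAddCommGroup E] [InnerProductSpace 𝕜 E]
    [NormedAddCommGroup F] [InnerProductSpace 𝕜 F] {u : α → F} {v : β → E}
    (hu : DenseRange u) (hv : DenseRange v) (T : E →L[𝕜] F) {C : ℝ} (hC : 0 ≤ C)
    (h : ∀ a b, ‖⟪u a, T (v b)⟫_𝕜‖ ≤ C * ‖u a‖ * ‖v b‖) : ‖T‖ ≤ C := by
  have hall : ∀ x y, ‖⟪x, T y⟫_𝕜‖ ≤ C * ‖x‖ * ‖y‖ := by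
    have hclosed : IsClosed {q : F × E | ‖⟪q.1, T q.2⟫_𝕜‖ ≤ C * ‖q.1‖ * ‖q.2‖} :=
      isClosed_le (by fun_prop) (by fun_prop)
    exact fun x y => isClosed_property (hu.prodMap hv) hclosed (fun q => h q.1 q.2) (x, y)
  refine opNorm_le_of_re_inner_le hC fun x y hx hy => ?_
  calc RCLike.re ⟪T x, y⟫_𝕜 ≤ ‖⟪T x, y⟫_𝕜‖ := RCLike.re_le_norm _
    _ = ‖⟪y, T x⟫_𝕜‖ := norm_inner_symm _ _
    _ ≤ C := by simpa [hx, hy] using hall y x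

namespace lp

variable {ι : Type*} [DecidableEq ι]

theorem denseRange_sum_single {E : ι → Type*} [∀ i, NormedAddCommGroup (E i)] {p : ℝ≥0∞}
    [Fact (1 ≤ p)] (hp : p ≠ ∞) :
    DenseRange fun s : Finset ι × (∀ i, E i) => ∑ i ∈ s.1, lp.single p i (s.2 i) := fun f =>
  mem_closure_of_tendsto (lp.hasSum_single hp f) (.of_forall fun s => ⟨(s, f), rfl⟩)

theorem norm_sum_single_congr {E : ι → Type*} [∀ i, NormedAddCommGroup (E i)] {p : ℝ≥0∞}
    [Fact (1 ≤ p)] (hp : 0 < p.toReal) (s : Finset ι) {f g : ∀ i, E i}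
    (hfg : ∀ i, ‖f i‖ = ‖g i‖) :
    ‖∑ i ∈ s, lp.single p i (f i)‖ = ‖∑ i ∈ s, lp.single p i (g i)‖ := by
  rw [← Real.rpow_left_inj (norm_nonneg _) (norm_nonneg _) hp.ne', lp.norm_sum_single hp,
    lp.norm_sum_single hp]
  simp only [hfg]

theorem inner_sum_single_apply_sum_single (T : ℓ²(ι, ℂ) →L[ℂ] ℓ²(ι, ℂ)) (A B : Finset ι)
    (c f : ι → ℂ) :
    ⟪∑ e ∈ A, lp.single 2 e (c e), T (∑ e' ∈ B, lp.single 2 e' (f e'))⟫_ℂ =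
      ∑ e ∈ A, ∑ e' ∈ B, conj (c e) * f e' * ⟪lp.single 2 e (1 : ℂ), T (lp.single 2 e' 1)⟫_ℂ := by
  have hsingle : ∀ e (a : ℂ), lp.single (E := fun _ : ι => ℂ) 2 e a = a • lp.single 2 e 1 :=
    fun e a => by rw [← lp.single_smul, smul_eq_mul, mul_one]
  simp only [hsingle _ (c _), hsingle _ (f _), map_sum, map_smul, sum_inner, inner_sum,
    inner_smul_left, inner_smul_right, mul_sum]
  rw [sum_comm]
  exact sum_congr rfl fun _ _ => sum_congr rfl fun _ _ => by ring

theorem norm_inner_sum_single_le_of_norm_eq (K : ℓ²(ι, ℂ) →L[ℂ] ℓ²(ι, ℂ)) (A B : Finset ι)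
    {c c' f f' : ι → ℂ} (hc : ∀ e, ‖c' e‖ = ‖c e‖) (hf : ∀ e, ‖f' e‖ = ‖f e‖) :
    ‖⟪∑ e ∈ A, lp.single 2 e (c' e), K (∑ e' ∈ B, lp.single 2 e' (f' e'))⟫_ℂ‖ ≤
      ‖K‖ * ‖∑ e ∈ A, lp.single 2 e (c e)‖ * ‖∑ e' ∈ B, lp.single 2 e' (f e')‖ := by
  rw [← norm_sum_single_congr (by norm_num) A hc, ← norm_sum_single_congr (by norm_num) B hf,
    mul_comm ‖K‖, mul_assoc]
  exact (norm_inner_le_norm _ _).trans (mul_le_mul_of_nonneg_left (K.le_opNorm _) (norm_nonneg _))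

end lp

section Commutator

variable {ι : Type*} [DecidableEq ι]

theorem norm_sum_exp_sub_exp_le (K : ℓ²(ι, ℂ) →L[ℂ] ℓ²(ι, ℂ)) (m : ι → ℝ) (h : ι → ι → ℂ)
    (hK : ∀ e e', ⟪lp.single 2 e (1 : ℂ), K (lp.single 2 e' 1)⟫_ℂ = (m e - m e') * h e e')
    (A B : Finset ι) (c f : ι → ℂ) :
    ‖∑ e ∈ A, ∑ e' ∈ B, conj (c e) * f e' * ((exp (m e * I) - exp (m e' * I)) * h e e')‖ ≤
      ‖K‖ * ‖∑ e ∈ A, lp.single 2 e (c e)‖ * ‖∑ e' ∈ B, lp.single 2 e' (f e')‖ := by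
  let phase : ℝ → ι → ℂ := fun t e => exp ((t * m e : ℝ) * I)
  have hphase : ∀ t e, ‖phase t e‖ = 1 := fun t e => norm_exp_ofReal_mul_I _
  let F : ℝ → ℂ := fun t => ∑ e ∈ A, ∑ e' ∈ B,
    conj (c e) * f e' * (exp ((m e' + t * (m e - m e') : ℝ) * I) * h e e')
  let F' : ℝ → ℂ := fun t => ∑ e ∈ A, ∑ e' ∈ B,
    conj (c e) * f e' * (exp ((m e' + t * (m e - m e') : ℝ) * I) * ((m e - m e' : ℝ) * I) * h e e')
  have hF : ∀ t, HasDerivAt F (F' t) t := by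
    intro t
    refine HasDerivAt.fun_sum fun e _ => HasDerivAt.fun_sum fun e' _ => ?_
    have hlin : HasDerivAt (fun t : ℝ => m e' + t * (m e - m e')) (m e - m e') t := by
      simpa using ((hasDerivAt_id t).mul_const (m e - m e')).const_add (m e')
    exact (((hlin.ofReal_comp.mul_const I).cexp).mul_const (h e e')).const_mul _
  have hF'_eq : ∀ t, F' t = I * ⟪∑ e ∈ A, lp.single 2 e (c e * conj (phase t e)),
      K (∑ e' ∈ B, lp.single 2 e' (f e' * phase (1 - t) e'))⟫_ℂ := by
    intro t
    rw [lp.inner_sum_single_apply_sum_single, mul_sum]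
    refine sum_congr rfl fun e _ => ?_
    rw [mul_sum]
    refine sum_congr rfl fun e' _ => ?_
    have hexp : phase t e * phase (1 - t) e' = exp ((m e' + t * (m e - m e') : ℝ) * I) := by
      simp only [phase, ← Complex.exp_add]
      congr 1
      push_cast
      ring
    rw [hK, map_mul, Complex.conj_conj, ← hexp]
    push_cast
    ring
  have hF'_le : ∀ t,
      ‖F' t‖ ≤ ‖K‖ * ‖∑ e ∈ A, lp.single 2 e (c e)‖ * ‖∑ e' ∈ B, lp.single 2 e' (f e')‖ := by
    intro t
    rw [hF'_eq, norm_mul, norm_I, one_mul]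
    exact lp.norm_inner_sum_single_le_of_norm_eq K A B (by simp [hphase]) (by simp [hphase])
  calc _ = ‖F 1 - F 0‖ := by
        simp only [F, ← sum_sub_distrib]
        congr 1
        refine sum_congr rfl fun e _ => sum_congr rfl fun e' _ => ?_
        push_cast
        ring_nf
    _ ≤ _ := norm_image_sub_le_of_norm_deriv_le_segment_01'
        (fun t _ => (hF t).hasDerivWithinAt) (fun t _ => hF'_le t)

theorem opNorm_le_of_inner_single_eq_sin_sub_sin (T K : ℓ²(ι, ℂ) →L[ℂ] ℓ²(ι, ℂ)) (m : ι → ℝ)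
    (h : ι → ι → ℂ)
    (hT : ∀ e e', ⟪lp.single 2 e (1 : ℂ), T (lp.single 2 e' 1)⟫_ℂ =
      (Real.sin (m e) - Real.sin (m e')) * h e e')
    (hK : ∀ e e', ⟪lp.single 2 e (1 : ℂ), K (lp.single 2 e' 1)⟫_ℂ = (m e - m e') * h e e') :
    ‖T‖ ≤ ‖K‖ := by
  have hdense := lp.denseRange_sum_single (E := fun _ : ι => ℂ) (p := 2) ENNReal.ofNat_ne_top
  refine T.opNorm_le_of_denseRange_of_norm_inner_le hdense hdense (norm_nonneg K) ?_
  rintro ⟨A, c⟩ ⟨B, f⟩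
  have hnegK : ∀ e e', ⟪lp.single 2 e (1 : ℂ), (-K) (lp.single 2 e' 1)⟫_ℂ =
      ((-m) e - (-m) e') * h e e' := fun e e' => by
    rw [neg_apply, inner_neg_right, hK, Pi.neg_apply, Pi.neg_apply, ofReal_neg, ofReal_neg]
    ring
  let D : (ι → ℝ) → ℂ := fun m => ∑ e ∈ A, ∑ e' ∈ B,
    conj (c e) * f e' * ((exp (m e * I) - exp (m e' * I)) * h e e')
  have hsplit : ⟪∑ e ∈ A, lp.single 2 e (c e), T (∑ e' ∈ B, lp.single 2 e' (f e'))⟫_ℂ =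
      (-I / 2) * (D m - D (-m)) := by
    rw [lp.inner_sum_single_apply_sum_single, ← sum_sub_distrib, mul_sum]
    refine sum_congr rfl fun e _ => ?_
    rw [← sum_sub_distrib, mul_sum]
    refine sum_congr rfl fun e' _ => ?_
    rw [hT, ofReal_sin, ofReal_sin, Complex.sin, Complex.sin]
    simp only [Pi.neg_apply, ofReal_neg, neg_mul]
    ring
  have hD : ‖D m‖ ≤ ‖K‖ * ‖∑ e ∈ A, lp.single 2 e (c e)‖ * ‖∑ e' ∈ B, lp.single 2 e' (f e')‖ :=
    norm_sum_exp_sub_exp_le K m h hK A B c f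
  have hD_neg : ‖D (-m)‖ ≤
      ‖-K‖ * ‖∑ e ∈ A, lp.single 2 e (c e)‖ * ‖∑ e' ∈ B, lp.single 2 e' (f e')‖ :=
    norm_sum_exp_sub_exp_le (-K) (-m) h hnegK A B c f
  rw [norm_neg] at hD_neg
  rw [hsplit, norm_mul, show ‖-I / 2‖ = 1 / 2 by simp]
  linarith [norm_sub_le (D m) (D (-m))]

theorem inner_single_apply_of_apply_single {S : ℓ²(ι, ℂ) →L[ℂ] ℓ²(ι, ℂ)} {s : ι → ℝ}
    (hS : ∀ e, S (lp.single 2 e 1) = (s e : ℂ) • lp.single 2 e 1) (e : ι) (y : ℓ²(ι, ℂ)) :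
    ⟪lp.single 2 e (1 : ℂ), S y⟫_ℂ = s e * ⟪lp.single 2 e (1 : ℂ), y⟫_ℂ := by
  have hadj : S.adjoint (lp.single 2 e 1) = (s e : ℂ) • lp.single 2 e 1 := by
    refine lp.ext (funext fun e' => ?_)
    have h := lp.inner_single_left (𝕜 := ℂ) (G := fun _ : ι => ℂ) e' 1 (S.adjoint (lp.single 2 e 1))
    rw [ContinuousLinearMap.adjoint_inner_right, hS, inner_smul_left, conj_ofReal,
      lp.inner_single_left] at h
    rw [lp.coeFn_smul, Pi.smul_apply]
    rcases eq_or_ne e' e with rfl | hne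
    · simpa using h.symm
    · simpa [Pi.single_eq_of_ne hne] using h.symm
  rw [← ContinuousLinearMap.adjoint_inner_left, hadj, inner_smul_left, conj_ofReal]

theorem inner_single_commutator_apply_single {S : ℓ²(ι, ℂ) →L[ℂ] ℓ²(ι, ℂ)} {s : ι → ℝ}
    (hS : ∀ e, S (lp.single 2 e 1) = (s e : ℂ) • lp.single 2 e 1) (H : ℓ²(ι, ℂ) →L[ℂ] ℓ²(ι, ℂ))
    (e e' : ι) :
    ⟪lp.single 2 e (1 : ℂ), (S * H - H * S) (lp.single 2 e' 1)⟫_ℂ =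
      (s e - s e') * ⟪lp.single 2 e (1 : ℂ), H (lp.single 2 e' 1)⟫_ℂ := by
  rw [sub_apply, mul_apply_eq_comp, mul_apply_eq_comp, inner_sub_right,
    inner_single_apply_of_apply_single hS, hS, map_smul, inner_smul_right]
  ring

end Commutator

theorem stmt10_general {d L : ℕ} (H K S : Ell2 d L →L[ℂ] Ell2 d L)
    (j : Fin d) (ρ : ℝ) (hρ : 0 < ρ)
    (hK : ∀ x y i l, matElem K x y i l = ((x j - y j : ℤ) : ℂ) * matElem H x y i l)
    (hS : ∀ (x : Fin d → ℤ) (i : Fin L), S (lp.single 2 (x, i) (1 : ℂ)) =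
      ((Real.sin (Real.pi * (x j : ℤ) / (2 * ρ)) : ℝ) : ℂ) • lp.single 2 (x, i) (1 : ℂ)) :
    ‖S * H - H * S‖ ≤ (Real.pi / (2 * ρ)) * ‖K‖ := by
  let pos : (Fin d → ℤ) × Fin L → ℝ := fun e => Real.pi * (e.1 j : ℤ) / (2 * ρ)
  have hK' : ∀ e e', ⟪lp.single 2 e (1 : ℂ),
      (((Real.pi / (2 * ρ) : ℝ) : ℂ) • K) (lp.single 2 e' 1)⟫_ℂ =
      (pos e - pos e') * ⟪lp.single 2 e (1 : ℂ), H (lp.single 2 e' 1)⟫_ℂ := by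
    rintro ⟨y, i⟩ ⟨y', i'⟩
    rw [smul_apply, inner_smul_right, ← matElem, ← matElem, hK]
    simp only [pos]
    push_cast
    ring
  calc ‖S * H - H * S‖ ≤ ‖((Real.pi / (2 * ρ) : ℝ) : ℂ) • K‖ :=
        opNorm_le_of_inner_single_eq_sin_sub_sin _ _ pos _
          (inner_single_commutator_apply_single (fun e => hS e.1 e.2) H) hK'
    _ = Real.pi / (2 * ρ) * ‖K‖ := by
        rw [norm_smul, norm_real, Real.norm_of_nonneg (by positivity)]

/-- for a bounded selfadjoint finite range operator `H` on `ℓ²(ℤ^d, ℂ^L)`,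
the commutator of `H` with the multiplication operator by `sin(π x_j/(2ρ))` is bounded by
`(π/(2ρ))·‖[X_j, H]‖`. -/
theorem stmt10 {d L : ℕ} (R : ℕ) (H K S : Ell2 d L →L[ℂ] Ell2 d L)
    (hH : IsSelfAdjoint H)
    (hrange : ∀ x y i l, (∃ j', (R : ℤ) < |x j' - y j'|) → matElem H x y i l = 0)
    (j : Fin d) (ρ : ℝ) (hρ : 0 < ρ)
    (hK : ∀ x y i l, matElem K x y i l = ((x j - y j : ℤ) : ℂ) * matElem H x y i l)
    (hS : ∀ (x : Fin d → ℤ) (i : Fin L), S (lp.single 2 (x, i) (1 : ℂ)) =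
      ((Real.sin (Real.pi * (x j : ℤ) / (2 * ρ)) : ℝ) : ℂ) • lp.single 2 (x, i) (1 : ℂ)) :
    ‖S * H - H * S‖ ≤ (Real.pi / (2 * ρ)) * ‖K‖ :=
  stmt10_general H K S j ρ hρ hK hS
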